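/- arXiv:2302.09660 — 4 statements merged into one kernel-verified Lean document; each statement's English description precedes it below -/
import Mathlib

section
/- Let (g,⟨·,·⟩) be a quadratic Lie algebra such that every 2-cocycle on g is a coboundary (i.e. for every 2-cocycle θ there is a linear functional f on g with θ(u,v) = f([u,v]) for all u,v), and suppose the center Z(g) is nonzero. Then g admits no k-symplectic structure for any k ≥ 1. -/
/-- A 2-cocycle on a real Lie algebra: an alternating bilinear form `θ` satisfying
`θ([u,v],w) + θ([v,w],u) + θ([w,u],v) = 0`. -/
def IsTwoCocycle {L : Type*} [LieRing L] [LieAlgebra ℝ L]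
    (θ : L →ₗ[ℝ] L →ₗ[ℝ] ℝ) : Prop :=
  (∀ u : L, θ u u = 0) ∧
  ∀ u v w : L, θ ⁅u, v⁆ w + θ ⁅v, w⁆ u + θ ⁅w, u⁆ v = 0

/-- A `k`-symplectic structure on a real Lie algebra `L` of dimension `n * (k+1)`:
a Lie subalgebra `H` of dimension `n * k` together with 2-cocycles `θ 1, …, θ k`
which are jointly nondegenerate and for which `H` is isotropic. -/
def IsKSymplectic {L : Type*} [LieRing L] [LieAlgebra ℝ L] (n k : ℕ)
    (H : LieSubalgebra ℝ L) (θ : Fin k → (L →ₗ[ℝ] L →ₗ[ℝ] ℝ)) : Prop :=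
  Module.finrank ℝ L = n * (k + 1) ∧
  Module.finrank ℝ H = n * k ∧
  (∀ i, IsTwoCocycle (θ i)) ∧
  (∀ u : L, (∀ i, ∀ v : L, θ i u v = 0) → u = 0) ∧
  (∀ i, ∀ u ∈ H, ∀ v ∈ H, θ i u v = 0)

/-- If in a quadratic Lie algebra every 2-cocycle is a coboundary and the center is
nonzero, then the Lie algebra admits no `k`-symplectic structure for any `k ≥ 1`. -/
theorem no_ksymplectic_of_trivial_H2_and_nontrivial_center
    {L : Type*} [LieRing L] [LieAlgebra ℝ L] [FiniteDimensional ℝ L]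
    (B : L →ₗ[ℝ] L →ₗ[ℝ] ℝ)
    (hBsymm : ∀ u v : L, B u v = B v u)
    (hBnd : ∀ u : L, (∀ v : L, B u v = 0) → u = 0)
    (hBinv : ∀ u v w : L, B ⁅u, v⁆ w + B v ⁅u, w⁆ = 0)
    (hH2 : ∀ θ : L →ₗ[ℝ] L →ₗ[ℝ] ℝ, IsTwoCocycle θ →
      ∃ f : L →ₗ[ℝ] ℝ, ∀ u v : L, θ u v = f ⁅u, v⁆)
    (hZ : LieAlgebra.center ℝ L ≠ ⊥) :
    ∀ (n k : ℕ), 1 ≤ k → ∀ (H : LieSubalgebra ℝ L) (θ : Fin k → (L →ₗ[ℝ] L →ₗ[ℝ] ℝ)),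
      ¬ IsKSymplectic n k H θ := by
  intro n k hk H θ hKS
  obtain ⟨hdim, hdimH, hcoc, hnd, hiso⟩ := hKS
  rw [ne_eq, LieSubmodule.eq_bot_iff] at hZ
  push_neg at hZ
  obtain ⟨z, hzmem, hz⟩ := hZ
  have hzc : ∀ v : L, ⁅z, v⁆ = 0 := by
    intro v
    have := (LieModule.mem_maxTrivSubmodule ℝ L L z).mp hzmem v
    rw [← lie_skew, this, neg_zero]
  apply hz
  apply hnd
  intro i v
  obtain ⟨f, hf⟩ := hH2 (θ i) (hcoc i)
  rw [hf, hzc, map_zero]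
end

section
/- Let (g,⟨·,·⟩) be a quadratic Lie algebra whose center Z(g) is one-dimensional and nondegenerate with respect to ⟨·,·⟩ (i.e. ⟨z,z⟩ ≠ 0 for a generator z of Z(g)). Then every skew-symmetric derivation D of g satisfies D(Z(g)) = 0. In particular, g admits no k-symplectic structure for any k ≥ 1. -/
/-- If the center of a quadratic Lie algebra is one-dimensional and nondegenerate, then
every skew-symmetric derivation vanishes on the center; in particular there is no
`k`-symplectic structure for any `k ≥ 1`. -/
theorem skew_derivation_kills_nondegenerate_center
    {L : Type*} [LieRing L] [LieAlgebra ℝ L] [FiniteDimensional ℝ L]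
    (B : L →ₗ[ℝ] L →ₗ[ℝ] ℝ)
    (hBsymm : ∀ u v : L, B u v = B v u)
    (hBnd : ∀ u : L, (∀ v : L, B u v = 0) → u = 0)
    (hBinv : ∀ u v w : L, B ⁅u, v⁆ w + B v ⁅u, w⁆ = 0)
    (hZ1 : Module.finrank ℝ ((LieAlgebra.center ℝ L).toSubmodule) = 1)
    (hZnd : ∀ z ∈ LieAlgebra.center ℝ L, z ≠ 0 → B z z ≠ 0) :
    (∀ D : L →ₗ[ℝ] L,
        (∀ u v : L, D ⁅u, v⁆ = ⁅D u, v⁆ + ⁅u, D v⁆) →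
        (∀ u v : L, B (D u) v + B u (D v) = 0) →
        ∀ z ∈ LieAlgebra.center ℝ L, D z = 0) ∧
    (∀ (n k : ℕ), 1 ≤ k →
      ∀ (H : LieSubalgebra ℝ L) (θ : Fin k → (L →ₗ[ℝ] L →ₗ[ℝ] ℝ)),
        ¬ IsKSymplectic n k H θ) := by
  have key : ∀ D : L →ₗ[ℝ] L,
      (∀ u v : L, D ⁅u, v⁆ = ⁅D u, v⁆ + ⁅u, D v⁆) →
      (∀ u v : L, B (D u) v + B u (D v) = 0) →
      ∀ z ∈ LieAlgebra.center ℝ L, D z = 0 := by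
    intro D hder hskew z hz
    by_cases hz0 : z = 0
    · simp [hz0]
    have hzc : ∀ x : L, ⁅x, z⁆ = 0 := (LieModule.mem_maxTrivSubmodule ℝ L L z).mp hz
    have hDz : D z ∈ (LieAlgebra.center ℝ L).toSubmodule := by
      rw [LieSubmodule.mem_toSubmodule, LieModule.mem_maxTrivSubmodule]
      intro x
      have h := hder x z
      rw [hzc x, hzc (D x), map_zero, zero_add] at h
      exact h.symm
    have hspan : Submodule.span ℝ {z} = (LieAlgebra.center ℝ L).toSubmodule := by
      apply Submodule.eq_of_le_of_finrank_le
      · rw [Submodule.span_le, Set.singleton_subset_iff]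
        simpa using hz
      · rw [hZ1, finrank_span_singleton hz0]
    rw [← hspan] at hDz
    obtain ⟨c, hc⟩ := Submodule.mem_span_singleton.mp hDz
    have hs := hskew z z
    rw [← hc] at hs
    rw [map_smul, LinearMap.smul_apply, map_smul] at hs
    have hzz := hZnd z hz hz0
    have hc0 : c = 0 := by
      simp only [smul_eq_mul] at hs
      rcases mul_eq_zero.mp (by linarith : c * B z z = 0) with h | h
      · exact h
      · exact absurd h hzz
    rw [← hc, hc0, zero_smul]
  refine ⟨key, ?_⟩
  intro n k _ H θ hKS
  obtain ⟨_, _, hco, hnd, _⟩ := hKS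
  -- find a nonzero central element
  obtain ⟨z, hz, hz0⟩ : ∃ z ∈ LieAlgebra.center ℝ L, z ≠ 0 := by
    by_contra h
    push_neg at h
    have hbot : (LieAlgebra.center ℝ L).toSubmodule = ⊥ := by
      rw [Submodule.eq_bot_iff]
      intro x hx
      exact h x ((LieSubmodule.mem_toSubmodule _).mp hx)
    rw [hbot] at hZ1
    simp at hZ1
  -- B as a linear equivalence onto the dual
  have hinj : Function.Injective B := by
    intro u v huv
    have : u - v = 0 := by
      apply hBnd
      intro w
      have : B u w = B v w := by rw [huv]
      simp [map_sub, this]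
    exact sub_eq_zero.mp this
  have hsurj : Function.Surjective B :=
    (LinearMap.injective_iff_surjective_of_finrank_eq_finrank
      Subspace.dual_finrank_eq.symm).mp hinj
  let e : L ≃ₗ[ℝ] Module.Dual ℝ L := LinearEquiv.ofBijective B ⟨hinj, hsurj⟩
  have hzero : ∀ i : Fin k, ∀ v : L, θ i z v = 0 := by
    intro i v
    obtain ⟨halt, hcoc⟩ := hco i
    have hanti : ∀ u v : L, θ i v u = -(θ i u v) := by
      intro u v
      have h := halt (u + v)
      simp only [map_add, LinearMap.add_apply, halt u, halt v] at h
      linarith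
    set D : L →ₗ[ℝ] L := (e.symm : Module.Dual ℝ L →ₗ[ℝ] L) ∘ₗ (θ i) with hD
    have hBD : ∀ u w : L, B (D u) w = θ i u w := by
      intro u w
      have : e (D u) = θ i u := e.apply_symm_apply (θ i u)
      have h2 : B (D u) = θ i u := this
      rw [h2]
    have hder : ∀ u v : L, D ⁅u, v⁆ = ⁅D u, v⁆ + ⁅u, D v⁆ := by
      intro u v
      have hall : ∀ w : L, B (D ⁅u, v⁆ - (⁅D u, v⁆ + ⁅u, D v⁆)) w = 0 := by
        intro w
        have e1 : B ⁅D u, v⁆ w = θ i u ⁅v, w⁆ := by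
          have h := hBinv v (D u) w
          have hsk : (⁅D u, v⁆ : L) = -⁅v, D u⁆ := (lie_skew (D u) v).symm
          rw [hsk, map_neg, LinearMap.neg_apply, hBD u ⁅v, w⁆] at *
          linarith
        have e2 : B ⁅u, D v⁆ w = -(θ i v ⁅u, w⁆) := by
          have h := hBinv u (D v) w
          rw [hBD v ⁅u, w⁆] at h
          linarith
        have e3 : B (D ⁅u, v⁆) w = θ i ⁅u, v⁆ w := hBD _ _
        have hc := hcoc u v w
        have h4 : θ i ⁅v, w⁆ u = -(θ i u ⁅v, w⁆) := hanti _ _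
        have h5 : θ i ⁅w, u⁆ v = θ i v ⁅u, w⁆ := by
          have : (⁅w, u⁆ : L) = -⁅u, w⁆ := (lie_skew w u).symm
          rw [this, map_neg, LinearMap.neg_apply, hanti ⁅u, w⁆ v]
        simp only [map_sub, map_add, LinearMap.sub_apply, LinearMap.add_apply, e1, e2, e3]
        linarith
      have := hBnd _ hall
      rw [sub_eq_zero] at this
      exact this
    have hskew : ∀ u v : L, B (D u) v + B u (D v) = 0 := by
      intro u v
      rw [hBD u v, hBsymm u (D v), hBD v u, hanti]
      ring
    have hDz0 : D z = 0 := key D hder hskew z hz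
    have : θ i z v = B (D z) v := (hBD z v).symm
    rw [this, hDz0, map_zero]
    rfl
  exact hz0 (hnd z hzero)
end

section
/- Let (g,⟨·,·⟩) be a quadratic nilpotent Lie algebra of dimension n. If g admits an (n−1)-symplectic structure, i.e. a Lie subalgebra h of dimension n−1 together with 2-cocycles θ_1,…,θ_{n−1} on g such that ⋂_{i=1}^{n−1} {u ∈ g : θ_i(u,v) = 0 for all v ∈ g} = {0} and θ_i(h,h) = 0 for all i, then g is abelian. -/
open LieModule Submodule

theorem Submodule.mem_of_sup_span_singleton_eq_top {R M : Type*} [Ring R] [AddCommGroup M]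
    [Module R M] {W P : Submodule R M} {y : M} (hWy : W ⊔ R ∙ y = ⊤) (hW : W ≤ P) (hy : y ∈ P)
    (u : M) : u ∈ P :=
  (hWy ▸ sup_le hW ((span_singleton_le_iff_mem y P).mpr hy) : ⊤ ≤ P) mem_top

section CommRing

variable {R L : Type*} [CommRing R] [LieRing L] [LieAlgebra R L]

theorem LieSubalgebra.exists_notMem_forall_lie_mem [LieRing.IsNilpotent L]
    {H : LieSubalgebra R L} (hH : H ≠ ⊤) : ∃ y ∉ H, ∀ u : L, ⁅u, y⁆ ∈ H := by
  by_contra! hcon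
  have hstep : ∀ m, (∀ z ∈ lowerCentralSeries R L L (m + 1), z ∈ H) →
      ∀ z ∈ lowerCentralSeries R L L m, z ∈ H := by
    intro m hm z hz
    by_contra hzH
    obtain ⟨u, hu⟩ := hcon z hzH
    refine hu (hm _ ?_)
    rw [lowerCentralSeries_succ]
    exact LieSubmodule.lie_mem_lie (LieSubmodule.mem_top u) hz
  have hdown : ∀ m, (∀ z ∈ lowerCentralSeries R L L m, z ∈ H) → ∀ z : L, z ∈ H := by
    intro m
    induction m with
    | zero => simp
    | succ m ih => exact fun hm => ih (hstep m hm)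
  obtain ⟨k, hk⟩ := (isNilpotent_iff R L L).mp ‹_›
  exact hH (eq_top_iff.mpr fun z _ => hdown k (by simp [hk]) z)

theorem LieSubalgebra.normalizer_eq_top_of_sup_span_singleton_eq_top {H : LieSubalgebra R L}
    {y : L} (hHy : H.toSubmodule ⊔ R ∙ y = ⊤) (hy : ∀ u : L, ⁅u, y⁆ ∈ H) : H.normalizer = ⊤ := by
  have hy' : y ∈ H.normalizer := (H.mem_normalizer_iff' y).mpr fun a _ => hy a
  exact eq_top_iff.mpr fun u _ =>
    mem_of_sup_span_singleton_eq_top (P := H.normalizer.toSubmodule) hHy H.le_normalizer hy' u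

theorem isLieAbelian_of_sup_span_singleton_eq_top {H : Submodule R L} {y : L}
    (hHy : H ⊔ R ∙ y = ⊤) (hH : ∀ a ∈ H, ∀ b ∈ H, ⁅a, b⁆ = 0) (hHy_comm : ∀ a ∈ H, ⁅a, y⁆ = 0) :
    IsLieAbelian L := by
  have hmem_center : ∀ z : L, (∀ b ∈ H, ⁅z, b⁆ = 0) → ⁅z, y⁆ = 0 →
      z ∈ LieAlgebra.center R L := by
    intro z hzH hzy
    rw [mem_maxTrivSubmodule]
    intro x
    rw [← lie_skew, neg_eq_zero]
    exact mem_of_sup_span_singleton_eq_top (P := LinearMap.ker (LieAlgebra.ad R L z)) hHy hzH hzy x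
  have hy_center : y ∈ LieAlgebra.center R L :=
    hmem_center y (fun b hb => by rw [← lie_skew, hHy_comm b hb, neg_zero]) (lie_self y)
  rw [LieAlgebra.isLieAbelian_iff_center_eq_top R]
  exact eq_top_iff.mpr fun x _ =>
    mem_of_sup_span_singleton_eq_top (P := (LieAlgebra.center R L).toSubmodule) hHy
      (fun a ha => hmem_center a (hH a ha) (hHy_comm a ha)) hy_center x

end CommRing

section Real

variable {L : Type*} [LieRing L] [LieAlgebra ℝ L]

theorem lie_eq_zero_of_isotropic_of_normalizer_eq_top {ι : Type*}
    {θ : ι → (L →ₗ[ℝ] L →ₗ[ℝ] ℝ)} (hθ : ∀ i, IsTwoCocycle (θ i))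
    (hθnd : ∀ u : L, (∀ i, ∀ v : L, θ i u v = 0) → u = 0)
    {H : LieSubalgebra ℝ L} (hH : H.normalizer = ⊤) (hiso : ∀ i, ∀ u ∈ H, ∀ v ∈ H, θ i u v = 0)
    {a b : L} (ha : a ∈ H) (hb : b ∈ H) : ⁅a, b⁆ = 0 := by
  have hideal : ∀ u : L, ∀ c ∈ H, ⁅u, c⁆ ∈ H := fun u c hc =>
    LieSubalgebra.ideal_in_normalizer (hH ▸ LieSubalgebra.mem_top u) hc
  refine hθnd _ fun i v => ?_
  have hbv : θ i ⁅b, v⁆ a = 0 := by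
    refine hiso i _ ?_ a ha
    rw [← lie_skew]
    exact neg_mem (hideal v b hb)
  have hva : θ i ⁅v, a⁆ b = 0 := hiso i _ (hideal v a ha) b hb
  linarith [(hθ i).2 a b v]

theorem invariant_form_lie_self {B : L →ₗ[ℝ] L →ₗ[ℝ] ℝ} (hBsymm : ∀ u v : L, B u v = B v u)
    (hBinv : ∀ u v w : L, B ⁅u, v⁆ w + B v ⁅u, w⁆ = 0) (u v : L) : B ⁅u, v⁆ v = 0 := by
  linarith [hBinv u v v, hBsymm v ⁅u, v⁆]

theorem lie_eq_zero_of_invariant_form_of_sup_span_singleton_eq_top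
    {B : L →ₗ[ℝ] L →ₗ[ℝ] ℝ} (hBsymm : ∀ u v : L, B u v = B v u)
    (hBnd : ∀ u : L, (∀ v : L, B u v = 0) → u = 0)
    (hBinv : ∀ u v w : L, B ⁅u, v⁆ w + B v ⁅u, w⁆ = 0)
    {H : Submodule ℝ L} {y : L} (hHy : H ⊔ ℝ ∙ y = ⊤) (hH : ∀ a ∈ H, ∀ b ∈ H, ⁅a, b⁆ = 0)
    {a : L} (ha : a ∈ H) : ⁅a, y⁆ = 0 := by
  refine hBnd _ fun v => mem_of_sup_span_singleton_eq_top (P := LinearMap.ker (B ⁅a, y⁆))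
    hHy (fun b hb => ?_) (invariant_form_lie_self hBsymm hBinv a y) v
  have hab := hBinv a y b
  rwa [hH a ha b hb, map_zero, add_zero] at hab

end Real

/-- A nilpotent quadratic Lie algebra of dimension `n` admitting an `(n-1)`-symplectic
structure is abelian. -/
theorem nilpotent_quadratic_with_nminus1_symplectic_is_abelian
    {L : Type*} [LieRing L] [LieAlgebra ℝ L] [FiniteDimensional ℝ L]
    (B : L →ₗ[ℝ] L →ₗ[ℝ] ℝ)
    (hBsymm : ∀ u v : L, B u v = B v u)
    (hBnd : ∀ u : L, (∀ v : L, B u v = 0) → u = 0)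
    (hBinv : ∀ u v w : L, B ⁅u, v⁆ w + B v ⁅u, w⁆ = 0)
    (hnilp : LieRing.IsNilpotent L)
    (n : ℕ) (hdim : Module.finrank ℝ L = n)
    (H : LieSubalgebra ℝ L) (hHdim : Module.finrank ℝ H = n - 1)
    (θ : Fin (n - 1) → (L →ₗ[ℝ] L →ₗ[ℝ] ℝ))
    (hθ : ∀ i, IsTwoCocycle (θ i))
    (hθnd : ∀ u : L, (∀ i, ∀ v : L, θ i u v = 0) → u = 0)
    (hiso : ∀ i, ∀ u ∈ H, ∀ v ∈ H, θ i u v = 0) :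
    IsLieAbelian L := by
  rcases Nat.eq_zero_or_pos n with rfl | hn
  · have : Subsingleton L := Module.finrank_zero_iff.mp hdim
    exact ⟨fun _ _ => Subsingleton.elim _ _⟩
  have hHdim' : Module.finrank ℝ H.toSubmodule = n - 1 := hHdim
  have hH : H ≠ ⊤ := by
    rintro rfl
    rw [LieSubalgebra.top_toSubmodule, finrank_top] at hHdim'
    omega
  obtain ⟨y, hyH, hy⟩ := H.exists_notMem_forall_lie_mem hH
  have hHy : H.toSubmodule ⊔ ℝ ∙ y = ⊤ :=
    eq_top_of_finrank_eq (by rw [finrank_sup_span_singleton hyH]; omega)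
  have hH_normal := H.normalizer_eq_top_of_sup_span_singleton_eq_top hHy hy
  have hH_abelian : ∀ a ∈ H, ∀ b ∈ H, ⁅a, b⁆ = 0 := fun a ha b hb =>
    lie_eq_zero_of_isotropic_of_normalizer_eq_top hθ hθnd hH_normal hiso ha hb
  exact isLieAbelian_of_sup_span_singleton_eq_top hHy hH_abelian fun a ha =>
    lie_eq_zero_of_invariant_form_of_sup_span_singleton_eq_top hBsymm hBnd hBinv hHy hH_abelian ha
end

section
/- Let so(3,1) be the 6-dimensional real Lie algebra with basis (e_1,…,e_6) and nonvanishing brackets [e_1,e_2]=e_3, [e_1,e_3]=−e_2, [e_1,e_4]=e_5, [e_1,e_5]=−e_4, [e_2,e_3]=e_1, [e_2,e_4]=e_6, [e_2,e_6]=−e_4, [e_3,e_5]=e_6, [e_3,e_6]=−e_5, [e_4,e_5]=−e_1, [e_4,e_6]=−e_2, [e_5,e_6]=−e_3. Set h = span(e_3, e_4, e_1+e_5, e_2+e_6), θ_1 = −e_1*∧e_2* − e_1*∧e_4* + e_2*∧e_3* + e_3*∧e_6* − e_4*∧e_5* + e_5*∧e_6*, and θ_2 = e_1*∧e_3* − e_1*∧e_5*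 + e_2*∧e_4* − e_2*∧e_6* + e_3*∧e_5* + e_4*∧e_6*. Then (h, θ_1, θ_2) is a 2-symplectic structure on so(3,1): h is a 4-dimensional Lie subalgebra, θ_1 and θ_2 are 2-cocycles vanishing on h×h, and {u : θ_1(u,·) = 0} ∩ {u : θ_2(u,·) = 0} = {0}. -/
/-- The alternating bilinear form `eᵢ* ∧ eⱼ*` associated to a basis `b`:
`(u, v) ↦ eᵢ*(u) eⱼ*(v) − eⱼ*(u) eᵢ*(v)`. -/
noncomputable def wedge {L : Type*} [AddCommGroup L] [Module ℝ L]
    (b : Module.Basis (Fin 6) ℝ L) (i j : Fin 6) (u v : L) : ℝ :=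
  b.repr u i * b.repr v j - b.repr u j * b.repr v i

/-- `θ₁ = −e₁*∧e₂* − e₁*∧e₄* + e₂*∧e₃* + e₃*∧e₆* − e₄*∧e₅* + e₅*∧e₆*` (0-indexed). -/
noncomputable def soTheta1 {L : Type*} [AddCommGroup L] [Module ℝ L]
    (b : Module.Basis (Fin 6) ℝ L) (u v : L) : ℝ :=
  -wedge b 0 1 u v - wedge b 0 3 u v + wedge b 1 2 u v + wedge b 2 5 u v
    - wedge b 3 4 u v + wedge b 4 5 u v

/-- `θ₂ = e₁*∧e₃* − e₁*∧e₅* + e₂*∧e₄* − e₂*∧e₆* + e₃*∧e₅* + e₄*∧e₆*` (0-indexed). -/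
noncomputable def soTheta2 {L : Type*} [AddCommGroup L] [Module ℝ L]
    (b : Module.Basis (Fin 6) ℝ L) (u v : L) : ℝ :=
  wedge b 0 2 u v - wedge b 0 4 u v + wedge b 1 3 u v - wedge b 1 5 u v
    + wedge b 2 4 u v + wedge b 3 5 u v


/-!
All claims are finite computations in the coordinates `x = b.repr u` of the basis. In these
coordinates the bracket is the explicit bilinear map `so31Bracket`, so the cocycle identities are
polynomial identities. The subspace `h` is the joint kernel of `e₅* − e₁*` and `e₆* − e₂*`; on it
the substitutions `x₅ = x₁`, `x₆ = x₂` show at once that `h` is closed under the bracket and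
isotropic for `θ₁` and `θ₂`. Finally `θ₁(u, eₖ) = θ₂(u, eₖ) = 0` is a linear system in the
coordinates of `u` whose only solution is `0`.
-/

theorem lie_eq_neg_of_lie_eq {L : Type*} [LieRing L] {x y z : L} (h : ⁅x, y⁆ = z) :
    ⁅y, x⁆ = -z := by
  rw [← lie_skew, h]

section Forms

variable {L : Type*} [AddCommGroup L] [Module ℝ L] (b : Module.Basis (Fin 6) ℝ L)

theorem wedge_self (i j : Fin 6) (u : L) : wedge b i j u u = 0 := by
  rw [wedge, mul_comm, sub_self]

theorem soTheta1_self (u : L) : soTheta1 b u u = 0 := by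
  simp [soTheta1, wedge_self]

theorem soTheta2_self (u : L) : soTheta2 b u u = 0 := by
  simp [soTheta2, wedge_self]

theorem eq_zero_of_soTheta1_soTheta2_eq_zero {u : L} (h₁ : ∀ v, soTheta1 b u v = 0)
    (h₂ : ∀ v, soTheta2 b u v = 0) : u = 0 := by
  set x := b.repr u
  have eq₁ : x 1 + x 3 = 0 := by simpa [soTheta1, wedge, x] using h₁ (b 0)
  have eq₂ : x 0 = -x 2 := by simpa [soTheta1, wedge, x, neg_add_eq_zero] using h₁ (b 1)
  have eq₃ : x 2 = x 4 := by simpa [soTheta2, wedge, x, neg_add_eq_zero] using h₂ (b 0)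
  have eq₄ : x 3 = x 5 := by simpa [soTheta2, wedge, x, neg_add_eq_zero] using h₂ (b 1)
  have eq₅ : x 0 = x 4 := by simpa [soTheta2, wedge, x, add_neg_eq_zero] using h₂ (b 2)
  have eq₆ : x 1 = x 5 := by simpa [soTheta2, wedge, x, add_neg_eq_zero] using h₂ (b 3)
  suffices hx : ∀ i, x i = 0 from b.forall_coord_eq_zero_iff.mp hx
  intro i
  match i with
  | 0 | 1 | 2 | 3 | 4 | 5 => linarith

/-- The subspace `h = span(e₃, e₄, e₁+e₅, e₂+e₆)` of the paper (indices shifted by one). -/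
noncomputable def so31H : Submodule ℝ L :=
  LinearMap.ker (b.coord 4 - b.coord 0) ⊓ LinearMap.ker (b.coord 5 - b.coord 1)

variable {b} in
theorem mem_so31H {x : L} :
    x ∈ so31H b ↔ b.repr x 4 = b.repr x 0 ∧ b.repr x 5 = b.repr x 1 := by
  simp [so31H, sub_eq_zero]

theorem span_eq_so31H : Submodule.span ℝ {b 2, b 3, b 0 + b 4, b 1 + b 5} = so31H b := by
  refine le_antisymm ?_ fun x hx => ?_
  · rw [Submodule.span_le]
    rintro x (rfl | rfl | rfl | rfl) <;> simp [mem_so31H]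
  · obtain ⟨hx4, hx5⟩ := mem_so31H.mp hx
    have hx_eq : x = b.repr x 2 • b 2 + b.repr x 3 • b 3 + b.repr x 0 • (b 0 + b 4) +
        b.repr x 1 • (b 1 + b 5) := by
      conv_lhs => rw [← b.sum_repr x]
      rw [Fin.sum_univ_six, hx4, hx5]
      module
    rw [hx_eq]
    refine add_mem (add_mem (add_mem ?_ ?_) ?_) ?_ <;>
      exact Submodule.smul_mem _ _ (Submodule.subset_span (by simp))

theorem linearIndependent_so31H :
    LinearIndependent ℝ (![b 2, b 3, b 0 + b 4, b 1 + b 5] : Fin 4 → L) := by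
  refine Fintype.linearIndependent_iff.mpr fun g hg i => ?_
  have hg_coord (j : Fin 6) := congrArg (fun x => b.repr x j) hg
  fin_cases i
  · simpa [Fin.sum_univ_four] using hg_coord 2
  · simpa [Fin.sum_univ_four] using hg_coord 3
  · simpa [Fin.sum_univ_four] using hg_coord 0
  · simpa [Fin.sum_univ_four] using hg_coord 1

theorem finrank_so31H : Module.finrank ℝ (so31H b) = 4 := by
  have hrange : Set.range (![b 2, b 3, b 0 + b 4, b 1 + b 5] : Fin 4 → L) =
      {b 2, b 3, b 0 + b 4, b 1 + b 5} := by
    simp only [Matrix.range_cons, Matrix.range_empty, Set.union_empty, Set.singleton_union]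
  rw [← span_eq_so31H, ← hrange, finrank_span_eq_card (linearIndependent_so31H b),
    Fintype.card_fin]

variable {b}

theorem soTheta1_eq_zero_of_mem_so31H {u v : L} (hu : u ∈ so31H b) (hv : v ∈ so31H b) :
    soTheta1 b u v = 0 := by
  rw [mem_so31H] at hu hv
  simp only [soTheta1, wedge, hu.1, hu.2, hv.1, hv.2]
  ring

theorem soTheta2_eq_zero_of_mem_so31H {u v : L} (hu : u ∈ so31H b) (hv : v ∈ so31H b) :
    soTheta2 b u v = 0 := by
  rw [mem_so31H] at hu hv
  simp only [soTheta2, wedge, hu.1, hu.2, hv.1, hv.2]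
  ring

end Forms

def so31Bracket (x y : Fin 6 → ℝ) : Fin 6 → ℝ :=
  ![x 1 * y 2 - x 2 * y 1 - x 3 * y 4 + x 4 * y 3,
    x 2 * y 0 - x 0 * y 2 - x 3 * y 5 + x 5 * y 3,
    x 0 * y 1 - x 1 * y 0 - x 4 * y 5 + x 5 * y 4,
    x 4 * y 0 - x 0 * y 4 - x 1 * y 5 + x 5 * y 1,
    x 0 * y 3 - x 3 * y 0 - x 2 * y 5 + x 5 * y 2,
    x 1 * y 3 - x 3 * y 1 + x 2 * y 4 - x 4 * y 2]

/-- The brackets of `so(3,1)` in the basis `b`; `b i` is the paper's `e_(i+1)`. -/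
structure IsSo31Basis {L : Type*} [LieRing L] [LieAlgebra ℝ L]
    (b : Module.Basis (Fin 6) ℝ L) : Prop where
  lie01 : ⁅b 0, b 1⁆ = b 2
  lie02 : ⁅b 0, b 2⁆ = -b 1
  lie03 : ⁅b 0, b 3⁆ = b 4
  lie04 : ⁅b 0, b 4⁆ = -b 3
  lie05 : ⁅b 0, b 5⁆ = 0
  lie12 : ⁅b 1, b 2⁆ = b 0
  lie13 : ⁅b 1, b 3⁆ = b 5
  lie14 : ⁅b 1, b 4⁆ = 0
  lie15 : ⁅b 1, b 5⁆ = -b 3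
  lie23 : ⁅b 2, b 3⁆ = 0
  lie24 : ⁅b 2, b 4⁆ = b 5
  lie25 : ⁅b 2, b 5⁆ = -b 4
  lie34 : ⁅b 3, b 4⁆ = -b 0
  lie35 : ⁅b 3, b 5⁆ = -b 1
  lie45 : ⁅b 4, b 5⁆ = -b 2

namespace IsSo31Basis

variable {L : Type*} [LieRing L] [LieAlgebra ℝ L] {b : Module.Basis (Fin 6) ℝ L}

theorem repr_lie (hb : IsSo31Basis b) (u v : L) :
    ⇑(b.repr ⁅u, v⁆) = so31Bracket (b.repr u) (b.repr v) := by
  suffices ⁅u, v⁆ = ∑ i, so31Bracket (b.repr u) (b.repr v) i • b i by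
    rw [this, b.repr_sum_self]
  conv_lhs => rw [← b.sum_repr u, ← b.sum_repr v]
  simp only [Fin.sum_univ_six, add_lie, lie_add, smul_lie, lie_smul, lie_self, hb.lie01,
    hb.lie02, hb.lie03, hb.lie04, hb.lie05, hb.lie12, hb.lie13, hb.lie14, hb.lie15, hb.lie23,
    hb.lie24, hb.lie25, hb.lie34, hb.lie35, hb.lie45, lie_eq_neg_of_lie_eq hb.lie01,
    lie_eq_neg_of_lie_eq hb.lie02, lie_eq_neg_of_lie_eq hb.lie03, lie_eq_neg_of_lie_eq hb.lie04,
    lie_eq_neg_of_lie_eq hb.lie05, lie_eq_neg_of_lie_eq hb.lie12, lie_eq_neg_of_lie_eq hb.lie13,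
    lie_eq_neg_of_lie_eq hb.lie14, lie_eq_neg_of_lie_eq hb.lie15, lie_eq_neg_of_lie_eq hb.lie23,
    lie_eq_neg_of_lie_eq hb.lie24, lie_eq_neg_of_lie_eq hb.lie25, lie_eq_neg_of_lie_eq hb.lie34,
    lie_eq_neg_of_lie_eq hb.lie35, lie_eq_neg_of_lie_eq hb.lie45, so31Bracket,
    Matrix.cons_val]
  module

theorem soTheta1_cocycle (hb : IsSo31Basis b) (u v w : L) :
    soTheta1 b ⁅u, v⁆ w + soTheta1 b ⁅v, w⁆ u + soTheta1 b ⁅w, u⁆ v = 0 := by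
  simp only [soTheta1, wedge, hb.repr_lie, so31Bracket, Matrix.cons_val]
  ring

theorem soTheta2_cocycle (hb : IsSo31Basis b) (u v w : L) :
    soTheta2 b ⁅u, v⁆ w + soTheta2 b ⁅v, w⁆ u + soTheta2 b ⁅w, u⁆ v = 0 := by
  simp only [soTheta2, wedge, hb.repr_lie, so31Bracket, Matrix.cons_val]
  ring

noncomputable def so31HLieSubalgebra (hb : IsSo31Basis b) : LieSubalgebra ℝ L :=
  { so31H b with
    lie_mem' := fun {x y} hx hy => by
      obtain ⟨hx4, hx5⟩ := mem_so31H.mp hx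
      obtain ⟨hy4, hy5⟩ := mem_so31H.mp hy
      refine mem_so31H.mpr ⟨?_, ?_⟩ <;>
        simp only [hb.repr_lie, so31Bracket, Matrix.cons_val, hx4, hx5, hy4, hy5] <;> ring }

end IsSo31Basis

/-- On `so(3,1)`, with `h = span(e₃, e₄, e₁+e₅, e₂+e₆)`, the triple `(h, θ₁, θ₂)` is a
2-symplectic structure: `h` is a 4-dimensional Lie subalgebra, `θ₁` and `θ₂` are
2-cocycles vanishing on `h × h`, and they are jointly nondegenerate. -/
theorem so31_two_symplectic
    {L : Type*} [LieRing L] [LieAlgebra ℝ L]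
    (b : Module.Basis (Fin 6) ℝ L)
    (h12 : ⁅b 0, b 1⁆ = b 2) (h13 : ⁅b 0, b 2⁆ = -b 1)
    (h14 : ⁅b 0, b 3⁆ = b 4) (h15 : ⁅b 0, b 4⁆ = -b 3) (h16 : ⁅b 0, b 5⁆ = 0)
    (h23 : ⁅b 1, b 2⁆ = b 0) (h24 : ⁅b 1, b 3⁆ = b 5)
    (h25 : ⁅b 1, b 4⁆ = 0) (h26 : ⁅b 1, b 5⁆ = -b 3)
    (h34 : ⁅b 2, b 3⁆ = 0) (h35 : ⁅b 2, b 4⁆ = b 5) (h36 : ⁅b 2, b 5⁆ = -b 4)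
    (h45 : ⁅b 3, b 4⁆ = -b 0) (h46 : ⁅b 3, b 5⁆ = -b 1)
    (h56 : ⁅b 4, b 5⁆ = -b 2) :
    (∃ H : LieSubalgebra ℝ L,
      H.toSubmodule = Submodule.span ℝ {b 2, b 3, b 0 + b 4, b 1 + b 5} ∧
      Module.finrank ℝ H = 4) ∧
    (∀ u : L, soTheta1 b u u = 0 ∧ soTheta2 b u u = 0) ∧
    (∀ u v w : L,
      soTheta1 b ⁅u, v⁆ w + soTheta1 b ⁅v, w⁆ u + soTheta1 b ⁅w, u⁆ v = 0) ∧
    (∀ u v w : L,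
      soTheta2 b ⁅u, v⁆ w + soTheta2 b ⁅v, w⁆ u + soTheta2 b ⁅w, u⁆ v = 0) ∧
    (∀ u ∈ Submodule.span ℝ ({b 2, b 3, b 0 + b 4, b 1 + b 5} : Set L),
      ∀ v ∈ Submodule.span ℝ ({b 2, b 3, b 0 + b 4, b 1 + b 5} : Set L),
        soTheta1 b u v = 0 ∧ soTheta2 b u v = 0) ∧
    (∀ u : L, (∀ v : L, soTheta1 b u v = 0) → (∀ v : L, soTheta2 b u v = 0) →
      u = 0) := by
  have hb : IsSo31Basis b :=
    ⟨h12, h13, h14, h15, h16, h23, h24, h25, h26, h34, h35, h36, h45, h46, h56⟩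
  rw [span_eq_so31H]
  exact ⟨⟨hb.so31HLieSubalgebra, rfl, finrank_so31H b⟩,
    fun u => ⟨soTheta1_self b u, soTheta2_self b u⟩, hb.soTheta1_cocycle, hb.soTheta2_cocycle,
    fun u hu v hv => ⟨soTheta1_eq_zero_of_mem_so31H hu hv, soTheta2_eq_zero_of_mem_so31H hu hv⟩,
    fun _ => eq_zero_of_soTheta1_soTheta2_eq_zero b⟩
end
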